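/- (Theorem 3, stationary equations.) Let η > 0 and (α*, b*) ∈ ℝ^m × ℝ. Then (α*, b*) is an η-stationary point of (SSVM) if and only if there exists an index set T* ⊆ {1,…,m} with |T*| = s and |(α* − η·g(α*,b*))_i| ≥ |(α* − η·g(α*,b*))_j| for all i ∈ T* and j ∉ T*, such that g_i(α*, b*) = 0 for all i ∈ T*, α*_j = 0 for all j ∉ T*, and Σ_{i∈T*} α*_i y_i = 0. -/

import Mathlib

/-!
Every vector of ℙ_s(β) agrees with β on a set T of s indices of largest |β_i| and vanishes
off T, and every such vector lies in ℙ_s(β). Indeed, a vector supported on S is at squared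
distance at least ∑_{i ∉ S} β_i² from β, with equality iff it agrees with β on S; and among sets
of size s the tail sum ∑_{i ∉ T} β_i² is minimal exactly for the sets of s largest entries,
because an exchange i ∈ T, j ∉ T changes it by β_i² − β_j². For β = α* − η g(α*, b*) and η > 0,
agreeing with β on T* is the equation g_i(α*, b*) = 0 for i ∈ T*.
-/

noncomputable section

open Finset Matrix

/-- Euclidean (ℓ₂) norm of a vector in ℝ^m. -/
def enorm {m : ℕ} (v : Fin m → ℝ) : ℝ := Real.sqrt (∑ i, (v i) ^ 2)

/-- The zero "norm": number of nonzero entries. -/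
def zeroNorm {m : ℕ} (α : Fin m → ℝ) : ℕ := {i | α i ≠ 0}.ncard

/-- The soft-margin loss ℓ_{cC}. -/
def softLoss (c C t : ℝ) : ℝ := if 0 ≤ t then C * t ^ 2 / 2 else c * t ^ 2 / 2

/-- The dual penalty h_{cC}. -/
def hLoss (c C t : ℝ) : ℝ := if 0 ≤ t then t ^ 2 / (2 * C) else t ^ 2 / (2 * c)

/-- The matrix Q whose j-th column is y_j · x_j. -/
def Qmat {m n : ℕ} (x : Fin m → Fin n → ℝ) (y : Fin m → ℝ) : Matrix (Fin n) (Fin m) ℝ :=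
  Matrix.of fun i j => y j * x j i

/-- The diagonal matrix E(α). -/
def Emat {m : ℕ} (c C : ℝ) (α : Fin m → ℝ) : Matrix (Fin m) (Fin m) ℝ :=
  Matrix.diagonal fun i => if 0 ≤ α i then 1 / C else 1 / c

/-- The Hessian H(α) = QᵀQ + E(α). -/
def Hmat {m n : ℕ} (c C : ℝ) (x : Fin m → Fin n → ℝ) (y : Fin m → ℝ) (α : Fin m → ℝ) :
    Matrix (Fin m) (Fin m) ℝ :=
  (Qmat x y)ᵀ * Qmat x y + Emat c C α

/-- The dual objective D(α) = (1/2)‖Qα‖² + (1/2)⟨E(α)α, α⟩ − ⟨1, α⟩. -/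
def Dfun {m n : ℕ} (c C : ℝ) (x : Fin m → Fin n → ℝ) (y : Fin m → ℝ) (α : Fin m → ℝ) : ℝ :=
  (1 / 2) * ∑ i, ((Qmat x y).mulVec α i) ^ 2
    + (1 / 2) * ∑ i, ((Emat c C α).mulVec α i) * α i
    - ∑ i, α i

/-- g(α, b) = H(α)α − 1 + b·y. -/
def gfun {m n : ℕ} (c C : ℝ) (x : Fin m → Fin n → ℝ) (y : Fin m → ℝ)
    (α : Fin m → ℝ) (b : ℝ) : Fin m → ℝ :=
  (Hmat c C x y α).mulVec α - (fun _ => (1 : ℝ)) + b • y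

/-- The hard-thresholding operator ℙ_s(α): minimizers of ‖u − α‖ over ‖u‖₀ ≤ s. -/
def hardThr {m : ℕ} (s : ℕ) (α : Fin m → ℝ) : Set (Fin m → ℝ) :=
  {u | zeroNorm u ≤ s ∧ ∀ v : Fin m → ℝ, zeroNorm v ≤ s → _root_.enorm (u - α) ≤ _root_.enorm (v - α)}

/-- Feasibility for the sparsity constrained problem (SSVM). -/
def feasible {m : ℕ} (y : Fin m → ℝ) (s : ℕ) (α : Fin m → ℝ) : Prop :=
  ∑ i, α i * y i = 0 ∧ zeroNorm α ≤ s

/-- (α, b) is an η-stationary point of (SSVM). -/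
def etaStat {m n : ℕ} (c C : ℝ) (x : Fin m → Fin n → ℝ) (y : Fin m → ℝ) (s : ℕ) (η : ℝ)
    (α : Fin m → ℝ) (b : ℝ) : Prop :=
  α ∈ hardThr s (α - η • gfun c C x y α b) ∧ ∑ i, α i * y i = 0

/-- The family T_s(α) of index sets of s largest entries in magnitude. -/
def Tsets {m : ℕ} (s : ℕ) (α : Fin m → ℝ) : Set (Finset (Fin m)) :=
  {T | T.card = s ∧ ∀ i ∈ T, ∀ j ∉ T, |α j| ≤ |α i|}

/-- The s-th largest entry of (|α₁|, …, |α_m|). -/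
def sthLargest {m : ℕ} (s : ℕ) (α : Fin m → ℝ) : ℝ :=
  sSup {t : ℝ | s ≤ {i | t ≤ |α i|}.ncard}

/-- Euclidean distance between pairs (α, b) and (α', b') in ℝ^m × ℝ. -/
def pairDist {m : ℕ} (α : Fin m → ℝ) (b : ℝ) (α' : Fin m → ℝ) (b' : ℝ) : ℝ :=
  Real.sqrt ((∑ i, (α i - α' i) ^ 2) + (b - b') ^ 2)

/-- Spectral (operator) norm of a matrix w.r.t. Euclidean norms. -/
def specNorm {m n : ℕ} (Q : Matrix (Fin n) (Fin m) ℝ) : ℝ :=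
  ‖LinearMap.toContinuousLinearMap (Matrix.toEuclideanLin Q)‖

section TopSets

variable {ι : Type*} {f : ι → ℝ} {S T : Finset ι}

def IsTopSet (f : ι → ℝ) (T : Finset ι) : Prop :=
  ∀ i ∈ T, ∀ j ∉ T, f j ≤ f i

theorem sum_le_sum_of_card_le_of_forall_le {M : Type*} [AddCommMonoid M] [LinearOrder M]
    [IsOrderedAddMonoid M] {f : ι → M} (hcard : #S ≤ #T)
    (hle : ∀ i ∈ S, ∀ j ∈ T, f i ≤ f j) (hT : ∀ j ∈ T, 0 ≤ f j) :
    ∑ i ∈ S, f i ≤ ∑ j ∈ T, f j := by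
  rcases T.eq_empty_or_nonempty with rfl | hTne
  · simp_all
  obtain ⟨j₀, hj₀, hmin⟩ := T.exists_min_image f hTne
  calc ∑ i ∈ S, f i ≤ #S • f j₀ := sum_le_card_nsmul _ _ _ fun i hi => hle i hi j₀ hj₀
    _ ≤ #T • f j₀ := nsmul_le_nsmul_left (hT j₀ hj₀) hcard
    _ ≤ ∑ j ∈ T, f j := card_nsmul_le_sum _ _ _ hmin

variable [DecidableEq ι]

theorem IsTopSet.sum_le_sum (hT : IsTopSet f T) (hf : ∀ i, 0 ≤ f i) (hcard : #S ≤ #T) :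
    ∑ i ∈ S, f i ≤ ∑ i ∈ T, f i := by
  rw [← sum_inter_add_sum_sdiff S T, ← sum_inter_add_sum_sdiff T S, inter_comm]
  refine add_le_add_right (sum_le_sum_of_card_le_of_forall_le ?_ ?_ fun j _ => hf j) _
  · have := card_sdiff_add_card_inter S T
    have := card_sdiff_add_card_inter T S
    rw [inter_comm] at this
    omega
  · intro i hi j hj
    exact hT j (mem_sdiff.1 hj).1 i (mem_sdiff.1 hi).2

theorem isTopSet_of_forall_sum_le (hmax : ∀ S, #S = #T → ∑ i ∈ S, f i ≤ ∑ i ∈ T, f i) :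
    IsTopSet f T := by
  intro i hi j hj
  have hj' : j ∉ T.erase i := fun h => hj (mem_of_mem_erase h)
  have hswap := hmax (insert j (T.erase i))
    (by rw [card_insert_of_notMem hj', card_erase_add_one hi])
  rw [sum_insert hj', ← sum_erase_add T f hi] at hswap
  linarith

variable [Fintype ι]

theorem sum_compl_le_sum_compl_iff :
    ∑ i ∈ Tᶜ, f i ≤ ∑ i ∈ Sᶜ, f i ↔ ∑ i ∈ S, f i ≤ ∑ i ∈ T, f i := by
  have := sum_compl_add_sum S f
  have := sum_compl_add_sum T f
  constructor <;> intro <;> linarith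

theorem sum_sq_sub_eq_of_eq_zero {v β : ι → ℝ} (hv : ∀ i ∉ S, v i = 0) :
    ∑ i, (v i - β i) ^ 2 = ∑ i ∈ S, (v i - β i) ^ 2 + ∑ i ∈ Sᶜ, β i ^ 2 := by
  rw [← sum_add_sum_compl S]
  congr 1
  refine sum_congr rfl fun i hi => ?_
  rw [hv i (mem_compl.1 hi)]
  ring

theorem sum_sq_sub_eq_sum_compl {v β : ι → ℝ} (hvT : ∀ i ∈ T, v i = β i)
    (hv : ∀ i ∉ T, v i = 0) : ∑ i, (v i - β i) ^ 2 = ∑ i ∈ Tᶜ, β i ^ 2 := by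
  rw [sum_sq_sub_eq_of_eq_zero hv, sum_eq_zero fun i hi => by simp [hvT i hi], zero_add]

end TopSets

section HardThreshold

variable {m s : ℕ} {α β v : Fin m → ℝ} {T : Finset (Fin m)}

theorem zeroNorm_le_iff : zeroNorm v ≤ s ↔ ∃ S : Finset (Fin m), #S ≤ s ∧ ∀ i ∉ S, v i = 0 := by
  constructor
  · intro h
    refine ⟨univ.filter (v · ≠ 0), ?_, fun i hi => by simpa using hi⟩
    simpa [zeroNorm, Set.ncard_eq_toFinset_card'] using h
  · rintro ⟨S, hS, hv⟩
    refine (Set.ncard_le_ncard (fun i hi => ?_) S.finite_toSet).trans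
      ((Set.ncard_coe_finset S).trans_le hS)
    by_contra hiS
    exact hi (hv i hiS)

theorem enorm_sub_le_enorm_sub_iff {u : Fin m → ℝ} :
    _root_.enorm (u - β) ≤ _root_.enorm (v - β) ↔
      ∑ i, (u i - β i) ^ 2 ≤ ∑ i, (v i - β i) ^ 2 :=
  Real.sqrt_le_sqrt_iff (sum_nonneg fun _ _ => sq_nonneg _)

theorem mem_Tsets_iff : T ∈ Tsets s β ↔ #T = s ∧ IsTopSet (fun i => β i ^ 2) T := by
  simp only [Tsets, IsTopSet, Set.mem_ofPred_eq, sq_le_sq]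

theorem mem_hardThr_of_mem_Tsets (hT : T ∈ Tsets s β) (hαT : ∀ i ∈ T, α i = β i)
    (hα : ∀ j ∉ T, α j = 0) : α ∈ hardThr s β := by
  obtain ⟨hcard, htop⟩ := mem_Tsets_iff.1 hT
  refine ⟨zeroNorm_le_iff.2 ⟨T, hcard.le, hα⟩, fun v hv => ?_⟩
  obtain ⟨S, hS, hvS⟩ := zeroNorm_le_iff.1 hv
  rw [enorm_sub_le_enorm_sub_iff, sum_sq_sub_eq_sum_compl hαT hα, sum_sq_sub_eq_of_eq_zero hvS]
  have htail := sum_compl_le_sum_compl_iff.2 (htop.sum_le_sum (fun i => sq_nonneg _) (hcard ▸ hS))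
  have : 0 ≤ ∑ i ∈ S, (v i - β i) ^ 2 := sum_nonneg fun _ _ => sq_nonneg _
  linarith

theorem sum_sq_sub_le_of_mem_hardThr (hα : α ∈ hardThr s β) (hT : #T ≤ s) :
    ∑ i, (α i - β i) ^ 2 ≤ ∑ i ∈ Tᶜ, β i ^ 2 := by
  let w : Fin m → ℝ := fun i => if i ∈ T then β i else 0
  have hw : ∀ j ∉ T, w j = 0 := fun j hj => if_neg hj
  rw [← sum_sq_sub_eq_sum_compl (v := w) (fun i hi => if_pos hi) hw]
  exact enorm_sub_le_enorm_sub_iff.1 (hα.2 w (zeroNorm_le_iff.2 ⟨T, hT, hw⟩))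

theorem exists_mem_Tsets_of_mem_hardThr (hs : s ≤ m) (hαβ : α ∈ hardThr s β) :
    ∃ T ∈ Tsets s β, (∀ i ∈ T, α i = β i) ∧ ∀ j ∉ T, α j = 0 := by
  obtain ⟨S, hS, hαS⟩ := zeroNorm_le_iff.1 hαβ.1
  obtain ⟨T, hST, hT⟩ := exists_superset_card_eq hS (by simpa using hs)
  obtain ⟨T₀, hT₀, hmax⟩ := exists_max_image (powersetCard s univ)
    (fun R => ∑ i ∈ R, β i ^ 2) (powersetCard_nonempty.2 (by simpa using hs))
  rw [mem_powersetCard_univ] at hT₀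
  have h₀ := sum_sq_sub_le_of_mem_hardThr hαβ hT₀.le
  have h₁ : ∑ i ∈ T₀ᶜ, β i ^ 2 ≤ ∑ i ∈ Tᶜ, β i ^ 2 :=
    sum_compl_le_sum_compl_iff.2 (hmax T (mem_powersetCard_univ.2 hT))
  have h₂ := sum_sdiff (compl_subset_compl.2 hST) (f := fun i => β i ^ 2)
  rw [sum_sq_sub_eq_of_eq_zero hαS] at h₀
  -- `h₀`, `h₁`, `h₂` form a closed chain of inequalities, so each of them is an equality.
  have hS_nonneg : 0 ≤ ∑ i ∈ S, (α i - β i) ^ 2 := sum_nonneg fun _ _ => sq_nonneg _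
  have hTS_nonneg : 0 ≤ ∑ i ∈ Sᶜ \ Tᶜ, β i ^ 2 := sum_nonneg fun _ _ => sq_nonneg _
  have hS₀ : ∑ i ∈ S, (α i - β i) ^ 2 = 0 := by linarith
  have hTS₀ : ∑ i ∈ Sᶜ \ Tᶜ, β i ^ 2 = 0 := by linarith
  have hαβS : ∀ i ∈ S, α i = β i := fun i hi => by
    simpa [sub_eq_zero] using (sum_eq_zero_iff_of_nonneg fun _ _ => sq_nonneg _).1 hS₀ i hi
  have hβ : ∀ i ∈ T, i ∉ S → β i = 0 := fun i hiT hiS => by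
    simpa using (sum_eq_zero_iff_of_nonneg fun _ _ => sq_nonneg _).1 hTS₀ i (by simp [hiS, hiT])
  refine ⟨T, mem_Tsets_iff.2 ⟨hT, isTopSet_of_forall_sum_le fun R hR => ?_⟩,
    fun i hi => ?_, fun j hj => hαS j fun h => hj (hST h)⟩
  · have hR₀ := hmax R (mem_powersetCard_univ.2 (hR.trans hT))
    have hRc : ∑ i ∈ Tᶜ, β i ^ 2 ≤ ∑ i ∈ Rᶜ, β i ^ 2 := by
      linarith [sum_compl_le_sum_compl_iff.2 hR₀]
    exact sum_compl_le_sum_compl_iff.1 hRc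
  · by_cases hiS : i ∈ S
    · exact hαβS i hiS
    · rw [hαS i hiS, hβ i hi hiS]

theorem mem_hardThr_iff (hs : s ≤ m) :
    α ∈ hardThr s β ↔ ∃ T ∈ Tsets s β, (∀ i ∈ T, α i = β i) ∧ ∀ j ∉ T, α j = 0 :=
  ⟨exists_mem_Tsets_of_mem_hardThr hs, fun ⟨_, hT, hαT, hα⟩ => mem_hardThr_of_mem_Tsets hT hαT hα⟩

end HardThreshold

theorem stmt_7_general {m n : ℕ} (c C : ℝ)
    (x : Fin m → Fin n → ℝ) (y : Fin m → ℝ)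
    (s : ℕ) (hs2 : s ≤ m) (η : ℝ) (hη : 0 < η)
    (αstar : Fin m → ℝ) (bstar : ℝ) :
    etaStat c C x y s η αstar bstar ↔
      ∃ Tstar ∈ Tsets s (αstar - η • gfun c C x y αstar bstar),
        (∀ i ∈ Tstar, gfun c C x y αstar bstar i = 0) ∧
        (∀ j ∉ Tstar, αstar j = 0) ∧
        (∑ i ∈ Tstar, αstar i * y i = 0) := by
  set g := gfun c C x y αstar bstar
  have hfix : ∀ i, αstar i = (αstar - η • g) i ↔ g i = 0 := fun i => by
    rw [Pi.sub_apply, Pi.smul_apply, smul_eq_mul, eq_sub_iff_add_eq, add_eq_left,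
      mul_eq_zero, or_iff_right hη.ne']
  have hsum : ∀ T : Finset (Fin m), (∀ j ∉ T, αstar j = 0) →
      ∑ i ∈ T, αstar i * y i = ∑ i, αstar i * y i := fun T hT =>
    sum_subset (subset_univ T) fun j _ hj => by rw [hT j hj, zero_mul]
  rw [etaStat, mem_hardThr_iff hs2]
  constructor
  · rintro ⟨⟨T, hT, hαT, hα⟩, hy⟩
    exact ⟨T, hT, fun i hi => (hfix i).1 (hαT i hi), hα, (hsum T hα).trans hy⟩
  · rintro ⟨T, hT, hg, hα, hy⟩
    exact ⟨⟨T, hT, fun i hi => (hfix i).2 (hg i hi), hα⟩, (hsum T hα).symm.trans hy⟩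

/-- stationary equations characterizing η-stationary points. -/
theorem stmt_7 {m n : ℕ} (hm : 1 ≤ m) (hn : 1 ≤ n) (c C : ℝ) (hc : 0 < c) (hcC : c < C)
    (x : Fin m → Fin n → ℝ) (y : Fin m → ℝ) (hy : ∀ i, y i = 1 ∨ y i = -1)
    (s : ℕ) (hs1 : 1 ≤ s) (hs2 : s ≤ m) (η : ℝ) (hη : 0 < η)
    (αstar : Fin m → ℝ) (bstar : ℝ) :
    etaStat c C x y s η αstar bstar ↔
      ∃ Tstar ∈ Tsets s (αstar - η • gfun c C x y αstar bstar),
        (∀ i ∈ Tstar, gfun c C x y αstar bstar i = 0) ∧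
        (∀ j ∉ Tstar, αstar j = 0) ∧
        (∑ i ∈ Tstar, αstar i * y i = 0) :=
  stmt_7_general c C x y s hs2 η hη αstar bstar
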